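/- arXiv:2011.06284 — 4 statements merged into one kernel-verified Lean document; each statement's English description precedes it below -/
import Mathlib

section
/- Let $n, m \in \mathbb{N}$, let $\mathcal{X} \subseteq \{0,1\}^n$ be a nonempty finite set, for each $x \in \mathcal{X}$ let $\mathcal{X}(x) \subseteq \{0,1\}^n$ be nonempty, let $\mathcal{U} \subseteq \mathbb{R}^m$ be a nonempty compact convex set, and let $f : \mathbb{R}^n \times \mathbb{R}^m \to \mathbb{R}$ be continuous, linear in its first argument (i.e. $y \mapsto f(y,c)$ is linear for every $c \in \mathcal{U}$) and concave in its second argument (i.e. $c \mapsto f(y,c)$ is concave for every $y$). Then $\min_{x \in \mathcal{X}} \max_{c \in \mathcal{U}} \min_{y \in \mathcal{X}(x)} f(y,c) \;=\; \min_{x \in \mathcal{X},\; y^{(1)},\ldots,y^{(n+1)} \in \mathcal{X}(x)} \max_{c \in \mathcal{U}} \min_{i = 1,\ldots,n+1} f(y^{(i)},c)$. -/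
/-!
Fix a first-stage decision `x` and put `S = X(x)` (finite) and
`v = max_{c ∈ U} min_{y ∈ S} f(y, c)`. The hypograph `{z ∈ ℝ^S | ∃ c ∈ U, z ≤ (f(y, c))_y}` is
convex by concavity of `f` in `c`, and it misses the open orthant `{z | z > v}`; a separating
hyperplane is a probability vector `μ` on `S` with `∑_y μ_y f(y, c) ≤ v` for every `c ∈ U`
(a finite minimax theorem). By linearity in `y`, the mean `y* = ∑_y μ_y y` satisfies
`f(y*, c) ≤ v`, and by Carathéodory `y*` is a convex combination of `n + 1` points of `S`: against
every `c`, the best of them does at least as well as `y*`. The reverse inequality holds because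
any `n + 1` candidates lie in `S`.
-/

open Set

theorem Set.finite_setOf_forall_eq_or_eq {ι α : Type*} [Finite ι] (a b : α) :
    {x : ι → α | ∀ i, x i = a ∨ x i = b}.Finite :=
  (Set.Finite.pi fun _ => toFinite ({a, b} : Set α)).subset fun x hx i _ => by
    rcases hx i with h | h <;> simp [h]

theorem IsCompact.bddAbove_image_of_le {α β : Type*} [ConditionallyCompleteLinearOrder α]
    [TopologicalSpace α] [ClosedIciTopology α] [TopologicalSpace β] {K : Set β}
    (hK : IsCompact K) {f g : β → α} (hf : ContinuousOn f K) (hgf : ∀ c ∈ K, g c ≤ f c) :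
    BddAbove (g '' K) := by
  obtain ⟨M, hM⟩ := hK.bddAbove_image hf
  exact ⟨M, by rintro _ ⟨c, hc, rfl⟩; exact (hgf c hc).trans (hM ⟨c, hc, rfl⟩)⟩

theorem nonneg_of_forall_lt_add_mul {a b w : ℝ} (h : ∀ s : ℝ, 0 ≤ s → w < a + s * b) :
    0 ≤ b := by
  by_contra! hb
  have hw : w < a := by simpa using h 0 le_rfl
  have := h ((a - w) / -b) (div_nonneg (sub_nonneg.2 hw.le) (neg_nonneg.2 hb.le))
  rw [div_mul_eq_mul_div, mul_div_assoc, div_neg, div_self hb.ne, mul_neg, mul_one] at this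
  linarith

theorem convex_setOf_exists_forall_le_of_concaveOn {ι F : Type*} [AddCommGroup F] [Module ℝ F]
    {U : Set F} (hU : Convex ℝ U) {g : ι → F → ℝ} (hg : ∀ k, ConcaveOn ℝ U (g k)) :
    Convex ℝ {z : ι → ℝ | ∃ c ∈ U, ∀ k, z k ≤ g k c} := by
  rintro z₁ ⟨c₁, hc₁, hz₁⟩ z₂ ⟨c₂, hc₂, hz₂⟩ a b ha hb hab
  refine ⟨a • c₁ + b • c₂, hU hc₁ hc₂ ha hb hab, fun k => ?_⟩
  calc a * z₁ k + b * z₂ k ≤ a * g k c₁ + b * g k c₂ := by gcongr <;> simp_all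
    _ ≤ g k (a • c₁ + b • c₂) := (hg k).2 hc₁ hc₂ ha hb hab

theorem exists_mem_stdSimplex_forall_sum_mul_le {ι F : Type*} [Fintype ι] [AddCommGroup F]
    [Module ℝ F] {U : Set F} (hUne : U.Nonempty) (hUconv : Convex ℝ U) {g : ι → F → ℝ}
    (hg : ∀ k, ConcaveOn ℝ U (g k)) {v : ℝ} (hv : ∀ c ∈ U, ∃ k, g k c ≤ v) :
    ∃ μ ∈ stdSimplex ℝ ι, ∀ c ∈ U, ∑ k, μ k * g k c ≤ v := by
  classical
  let O : Set (ι → ℝ) := univ.pi fun _ => Ioi v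
  let C : Set (ι → ℝ) := {z | ∃ c ∈ U, ∀ k, z k ≤ g k c}
  have hdisj : Disjoint O C := by
    refine disjoint_left.2 fun z hzO ⟨c, hc, hzC⟩ => ?_
    obtain ⟨k, hk⟩ := hv c hc
    exact (hzO k (mem_univ k)).not_ge ((hzC k).trans hk)
  obtain ⟨φ, u, hφO, hφC⟩ := geometric_hahn_banach_open (convex_pi fun _ _ => convex_Ioi v)
    (isOpen_set_pi finite_univ fun _ _ => isOpen_Ioi)
    (convex_setOf_exists_forall_le_of_concaveOn hUconv hg) hdisj
  let e : ι → ι → ℝ := fun k j => if k = j then 1 else 0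
  let w : ι → ℝ := fun k => -φ (e k)
  let σ := ∑ k, w k
  have hφ : ∀ z, φ z = -∑ k, w k * z k := fun z => by
    simpa [w, e, mul_comm] using LinearMap.pi_apply_eq_sum_univ (φ : (ι → ℝ) →ₗ[ℝ] ℝ) z
  have hφconst : ∀ t, φ (fun _ => t) = -(σ * t) := fun t => by simp [hφ, σ, Finset.sum_mul]
  -- `O` is stable under raising any coordinate, and `φ` is bounded above on `O`.
  have hw : ∀ k, 0 ≤ w k := fun k => nonneg_of_forall_lt_add_mul (a := -φ fun _ => v + 1)
    (w := -u) fun s hs => by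
      have := hφO ((fun _ => v + 1) + s • e k) fun j _ => by
        by_cases hkj : k = j <;> simp [e, hkj]
        linarith
      simp only [map_add, map_smul, smul_eq_mul] at this
      simp only [w]
      linarith
  obtain ⟨c₀, hc₀⟩ := hUne
  have hσ : 0 < σ := by
    refine (Finset.sum_nonneg fun k _ => hw k).lt_of_ne fun hσ => ?_
    have hw0 := (Finset.sum_eq_zero_iff_of_nonneg fun k _ => hw k).1 hσ.symm
    have hO := hφO (fun _ => v + 1) fun _ _ => by simp
    have hC := hφC (fun k => g k c₀) ⟨c₀, hc₀, fun _ => le_rfl⟩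
    simp [hφ, hw0] at hO hC
    linarith
  refine ⟨fun k => w k / σ, ⟨fun k => div_nonneg (hw k) hσ.le, by
    rw [← Finset.sum_div, div_self hσ.ne']⟩, fun c hc => le_of_forall_pos_lt_add fun ε hε => ?_⟩
  have hO := hφO (fun _ => v + ε) fun _ _ => by simp [hε]
  have hC := hφC (fun k => g k c) ⟨c, hc, fun _ => le_rfl⟩
  rw [hφconst] at hO
  rw [hφ] at hC
  simp only [div_mul_eq_mul_div, ← Finset.sum_div, div_lt_iff₀ hσ]
  linarith

theorem exists_fin_mem_stdSimplex_sum_smul_eq_of_mem_convexHull {𝕜 E : Type*} [Field 𝕜]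
    [LinearOrder 𝕜] [IsStrictOrderedRing 𝕜] [AddCommGroup E] [Module 𝕜 E] [FiniteDimensional 𝕜 E]
    {S : Set E} {y : E} (hy : y ∈ convexHull 𝕜 S) {N : ℕ} (hN : Module.finrank 𝕜 E < N) :
    ∃ ys : Fin N → E, (∀ i, ys i ∈ S) ∧ ∃ w ∈ stdSimplex 𝕜 (Fin N), ∑ i, w i • ys i = y := by
  classical
  obtain ⟨ι, _, z, w, hzS, hz, hw₀, hw₁, rfl⟩ := eq_pos_convex_span_of_mem_convexHull hy
  obtain ⟨j₀⟩ : Nonempty ι := by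
    by_contra! h
    simp at hw₁
  have hcard : Fintype.card ι ≤ Fintype.card (Fin N) := by
    have := (Submodule.finrank_le (vectorSpan 𝕜 (range z))).trans_lt hN
    have := hz.card_le_finrank_succ
    simp only [Fintype.card_fin]
    omega
  obtain ⟨e⟩ := Function.Embedding.nonempty_of_card_le hcard
  refine ⟨Function.extend e z fun _ => z j₀, fun i => ?_, Function.extend e w 0,
    ⟨fun i => ?_, ?_⟩, ?_⟩
  · by_cases hi : ∃ j, e j = i
    · obtain ⟨j, rfl⟩ := hi
      rw [e.injective.extend_apply]; exact hzS (mem_range_self j)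
    · rw [Function.extend_apply' _ _ _ hi]; exact hzS (mem_range_self j₀)
  · by_cases hi : ∃ j, e j = i
    · obtain ⟨j, rfl⟩ := hi
      rw [e.injective.extend_apply]; exact (hw₀ j).le
    · rw [Function.extend_apply' _ _ _ hi]; rfl
  · rw [← hw₁]
    refine (Fintype.sum_of_injective e e.injective _ _ (fun i hi => ?_) fun j => ?_).symm
    · exact Function.extend_apply' _ _ _ hi
    · rw [e.injective.extend_apply]
  · refine (Fintype.sum_of_injective e e.injective _ _ (fun i hi => ?_) fun j => ?_).symm
    · rw [Function.extend_apply' _ _ _ hi, Pi.zero_apply, zero_smul]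
    · rw [e.injective.extend_apply, e.injective.extend_apply]

theorem ciInf_le_sum_mul_of_mem_stdSimplex {ι : Type*} [Fintype ι] {w : ι → ℝ}
    (hw : w ∈ stdSimplex ℝ ι) (a : ι → ℝ) : ⨅ i, a i ≤ ∑ i, w i * a i :=
  calc ⨅ i, a i = ∑ i, w i * ⨅ j, a j := by rw [← Finset.sum_mul, hw.2, one_mul]
    _ ≤ ∑ i, w i * a i := Finset.sum_le_sum fun i _ =>
      mul_le_mul_of_nonneg_left (ciInf_le (finite_range a).bddBelow i) (hw.1 i)

theorem exists_fin_sSup_iInf_le_sSup_sInf {E F : Type*} [AddCommGroup E] [Module ℝ E]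
    [FiniteDimensional ℝ E] [AddCommGroup F] [Module ℝ F] {U : Set F} (hUne : U.Nonempty)
    (hUconv : Convex ℝ U) {f : E → F → ℝ} (hflin : ∀ c ∈ U, IsLinearMap ℝ fun y => f y c)
    {S : Set E} (hfconc : ∀ y ∈ S, ConcaveOn ℝ U (f y)) (hSfin : S.Finite) (hSne : S.Nonempty)
    (hbdd : BddAbove ((fun c => sInf ((fun y => f y c) '' S)) '' U)) {N : ℕ}
    (hN : Module.finrank ℝ E < N) :
    ∃ ys : Fin N → E, (∀ i, ys i ∈ S) ∧
      sSup ((fun c => ⨅ i, f (ys i) c) '' U)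
        ≤ sSup ((fun c => sInf ((fun y => f y c) '' S)) '' U) := by
  set v := sSup ((fun c => sInf ((fun y => f y c) '' S)) '' U)
  have hv : ∀ c ∈ U, ∃ y : S, f y c ≤ v := fun c hc => by
    obtain ⟨y, hy, hyc⟩ := (hSne.image _).csInf_mem (hSfin.image fun y => f y c)
    exact ⟨⟨y, hy⟩, hyc.le.trans (le_csSup hbdd ⟨c, hc, rfl⟩)⟩
  have := hSfin.fintype
  obtain ⟨μ, hμ, hμv⟩ :=
    exists_mem_stdSimplex_forall_sum_mul_le hUne hUconv (fun y : S => hfconc y y.2) hv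
  have hmem : ∑ y : S, μ y • (y : E) ∈ convexHull ℝ S := (convex_convexHull ℝ S).sum_mem
    (fun y _ => hμ.1 y) hμ.2 fun y _ => subset_convexHull ℝ S y.2
  obtain ⟨ys, hys, w, hw, hwys⟩ :=
    exists_fin_mem_stdSimplex_sum_smul_eq_of_mem_convexHull hmem hN
  refine ⟨ys, hys, csSup_le (hUne.image _) ?_⟩
  rintro _ ⟨c, hc, rfl⟩
  let L := IsLinearMap.mk' _ (hflin c hc)
  calc ⨅ i, f (ys i) c ≤ ∑ i, w i * f (ys i) c := ciInf_le_sum_mul_of_mem_stdSimplex hw _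
    _ = L (∑ i, w i • ys i) := by simp [L, map_sum]
    _ = ∑ y : S, μ y * f y c := by simp [hwys, L, map_sum]
    _ ≤ v := hμv c hc

theorem recoverable_robust_reformulation_general (n m : ℕ)
    (X : Set (Fin n → ℝ))
    (Xr : (Fin n → ℝ) → Set (Fin n → ℝ))
    (hXrsub : ∀ x ∈ X, Xr x ⊆ {y | ∀ i, y i = 0 ∨ y i = 1})
    (hXrne : ∀ x ∈ X, (Xr x).Nonempty)
    (U : Set (Fin m → ℝ)) (hUne : U.Nonempty) (hUcomp : IsCompact U) (hUconv : Convex ℝ U)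
    (f : (Fin n → ℝ) → (Fin m → ℝ) → ℝ)
    (hfcont : Continuous fun p : (Fin n → ℝ) × (Fin m → ℝ) => f p.1 p.2)
    (hflin : ∀ c ∈ U, IsLinearMap ℝ fun y => f y c)
    (hfconc : ∀ y : Fin n → ℝ, ConcaveOn ℝ U fun c => f y c) :
    sInf ((fun x => sSup ((fun c => sInf ((fun y => f y c) '' Xr x)) '' U)) '' X)
      = sInf {v : ℝ | ∃ x ∈ X, ∃ ys : Fin (n + 1) → (Fin n → ℝ),
          (∀ i, ys i ∈ Xr x) ∧
          v = sSup ((fun c => ⨅ i : Fin (n + 1), f (ys i) c) '' U)} := by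
  have hcont (y : Fin n → ℝ) : Continuous fun c => f y c :=
    hfcont.comp (continuous_const.prodMk continuous_id)
  have hXrfin : ∀ x ∈ X, (Xr x).Finite := fun x hx =>
    (finite_setOf_forall_eq_or_eq 0 1).subset (hXrsub x hx)
  refine csInf_eq_csInf_of_forall_exists_le ?_ ?_
  · rintro _ ⟨x, hx, rfl⟩
    obtain ⟨y₀, hy₀⟩ := hXrne x hx
    have hbdd : BddAbove ((fun c => sInf ((fun y => f y c) '' Xr x)) '' U) :=
      hUcomp.bddAbove_image_of_le (hcont y₀).continuousOn fun c _ =>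
        csInf_le ((hXrfin x hx).image _).bddBelow ⟨y₀, hy₀, rfl⟩
    obtain ⟨ys, hys, hle⟩ := exists_fin_sSup_iInf_le_sSup_sInf hUne hUconv hflin
      (fun y _ => hfconc y) (hXrfin x hx) ⟨y₀, hy₀⟩ hbdd (N := n + 1) (by simp)
    exact ⟨_, ⟨x, hx, ys, hys, rfl⟩, hle⟩
  · rintro _ ⟨x, hx, ys, hys, rfl⟩
    have hbdd : BddAbove ((fun c => ⨅ i, f (ys i) c) '' U) :=
      hUcomp.bddAbove_image_of_le (hcont (ys 0)).continuousOn fun c _ =>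
        ciInf_le (finite_range _).bddBelow 0
    refine ⟨_, ⟨x, hx, rfl⟩, csSup_le (hUne.image _) ?_⟩
    rintro _ ⟨c, hc, rfl⟩
    exact le_csSup_of_le hbdd ⟨c, hc, rfl⟩ <| le_ciInf fun i =>
      csInf_le ((hXrfin x hx).image _).bddBelow ⟨ys i, hys i, rfl⟩

/-- **General recoverable-robust reformulation theorem.**
A two-stage min-max-min problem over binary first- and second-stage decisions with a
compact convex uncertainty set is equivalent to choosing the first-stage solution together
with `n+1` candidate recovery solutions up front and letting the adversary face the best
of these candidates. -/
theorem recoverable_robust_reformulation (n m : ℕ)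
    (X : Set (Fin n → ℝ)) (hXsub : X ⊆ {x | ∀ i, x i = 0 ∨ x i = 1})
    (hXfin : X.Finite) (hXne : X.Nonempty)
    (Xr : (Fin n → ℝ) → Set (Fin n → ℝ))
    (hXrsub : ∀ x ∈ X, Xr x ⊆ {y | ∀ i, y i = 0 ∨ y i = 1})
    (hXrne : ∀ x ∈ X, (Xr x).Nonempty)
    (U : Set (Fin m → ℝ)) (hUne : U.Nonempty) (hUcomp : IsCompact U) (hUconv : Convex ℝ U)
    (f : (Fin n → ℝ) → (Fin m → ℝ) → ℝ)
    (hfcont : Continuous fun p : (Fin n → ℝ) × (Fin m → ℝ) => f p.1 p.2)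
    (hflin : ∀ c ∈ U, IsLinearMap ℝ fun y => f y c)
    (hfconc : ∀ y : Fin n → ℝ, ConcaveOn ℝ U fun c => f y c) :
    sInf ((fun x => sSup ((fun c => sInf ((fun y => f y c) '' Xr x)) '' U)) '' X)
      = sInf {v : ℝ | ∃ x ∈ X, ∃ ys : Fin (n + 1) → (Fin n → ℝ),
          (∀ i, ys i ∈ Xr x) ∧
          v = sSup ((fun c => ⨅ i : Fin (n + 1), f (ys i) c) '' U)} :=
  recoverable_robust_reformulation_general n m X Xr hXrsub hXrne U hUne hUcomp hUconv f hfcont hflin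
    hfconc
end

section
/- Let $q \ge 3$ be odd, let $v_0, v_1, \ldots, v_{q-1}$ be distinct vertices (indices taken modulo $q$), and let $a, b$ be real-valued functions on the vertices such that every cycle edge has strictly positive product weight, i.e. $(a_{v_k} - a_{v_{k+1}})(b_{v_k} - b_{v_{k+1}}) > 0$ for all $k = 0, \ldots, q-1$. Then there exists an index $k$ such that $(a_{v_k} - a_{v_{k+2}})(b_{v_k} - b_{v_{k+2}}) \;>\; (a_{v_k} - a_{v_{k+1}})(b_{v_k} - b_{v_{k+1}}) + (a_{v_{k+1}} - a_{v_{k+2}})(b_{v_{k+1}} - b_{v_{k+2}})$. -/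
/-- **Odd half-integral cycles admit a strictly improving shortcut.**
Along a cycle of odd length `q ≥ 3` on distinct vertices `v 0, …, v (q-1)` (indices
modulo `q`) all of whose edges have strictly positive product weight
`(a i - a j)(b i - b j)`, there are two consecutive edges whose total weight is strictly
less than the weight of the shortcut edge joining their endpoints. -/
theorem odd_cycle_exists_improving_shortcut {V : Type*}
    (q : ℕ) (hq3 : 3 ≤ q) (hqodd : Odd q) (v : ℕ → V)
    (hdist : ∀ i < q, ∀ j < q, i ≠ j → v i ≠ v j)
    (a b : V → ℝ)
    (hpos : ∀ k < q,
      0 < (a (v k) - a (v ((k + 1) % q))) * (b (v k) - b (v ((k + 1) % q)))) :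
    ∃ k < q,
      (a (v k) - a (v ((k + 1) % q))) * (b (v k) - b (v ((k + 1) % q)))
        + (a (v ((k + 1) % q)) - a (v ((k + 2) % q)))
          * (b (v ((k + 1) % q)) - b (v ((k + 2) % q)))
      < (a (v k) - a (v ((k + 2) % q))) * (b (v k) - b (v ((k + 2) % q))) := by
  classical
  set P : ℕ → Prop := fun k => a (v k) < a (v ((k + 1) % q)) with hP
  -- Step 1: two consecutive edges of the same monotonicity type
  have key : ∃ k < q, (P k ↔ P ((k + 1) % q)) := by
    by_contra h
    push_neg at h
    have claim : ∀ k, k < q → (P k ↔ (Even k ↔ P 0)) := by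
      intro k
      induction k with
      | zero => intro _; simp
      | succ n ih =>
        intro hn1
        have hn : n < q := by omega
        have hne := h n hn
        have hmod : (n + 1) % q = n + 1 := Nat.mod_eq_of_lt hn1
        rw [hmod] at hne
        have hev : Even (n + 1) ↔ ¬ Even n := Nat.even_add_one
        have := ih hn
        tauto
    have hq1 : q - 1 < q := by omega
    have hev : Even (q - 1) := by
      obtain ⟨m, hm⟩ := hqodd
      exact ⟨m, by omega⟩
    have h1 := claim (q - 1) hq1
    have h2 := h (q - 1) hq1
    have hmod : (q - 1 + 1) % q = 0 := by
      have : q - 1 + 1 = q := by omega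
      rw [this, Nat.mod_self]
    rw [hmod] at h2
    tauto
  obtain ⟨k, hk, hiff⟩ := key
  refine ⟨k, hk, ?_⟩
  have hk1 : (k + 1) % q < q := Nat.mod_lt _ (by omega)
  have e1 := hpos k hk
  have e2 := hpos ((k + 1) % q) hk1
  have hmod : ((k + 1) % q + 1) % q = (k + 2) % q := by
    rw [Nat.mod_add_mod]
  rw [hmod] at e2
  set x1 := a (v k) - a (v ((k + 1) % q)) with hx1
  set y1 := b (v k) - b (v ((k + 1) % q)) with hy1
  set x2 := a (v ((k + 1) % q)) - a (v ((k + 2) % q)) with hx2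
  set y2 := b (v ((k + 1) % q)) - b (v ((k + 2) % q)) with hy2
  have hgoal : a (v k) - a (v ((k + 2) % q)) = x1 + x2 := by ring
  have hgoalb : b (v k) - b (v ((k + 2) % q)) = y1 + y2 := by ring
  rw [hgoal, hgoalb]
  have hP1 : P k ↔ x1 < 0 := by rw [hP, hx1, sub_neg]
  have hP2 : P ((k + 1) % q) ↔ x2 < 0 := by
    simp only [hP, hmod, hx2, sub_neg]
  by_cases hc : P k
  · have hx1n : x1 < 0 := hP1.mp hc
    have hx2n : x2 < 0 := hP2.mp (hiff.mp hc)
    have hy1n : y1 < 0 := by nlinarith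
    have hy2n : y2 < 0 := by nlinarith
    nlinarith [mul_pos (neg_pos.2 hx1n) (neg_pos.2 hy2n),
      mul_pos (neg_pos.2 hx2n) (neg_pos.2 hy1n)]
  · have hx1p : x1 > 0 := by
      have h0 : ¬ x1 < 0 := fun h' => hc (hP1.mpr h')
      rcases lt_trichotomy x1 0 with h | h | h
      · exact absurd h h0
      · exfalso; rw [h] at e1; simp at e1
      · exact h
    have hx2p : x2 > 0 := by
      have h0 : ¬ x2 < 0 := fun h' => hc (hiff.mpr (hP2.mpr h'))
      rcases lt_trichotomy x2 0 with h | h | h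
      · exact absurd h h0
      · exfalso; rw [h] at e2; simp at e2
      · exact h
    have hy1p : y1 > 0 := by nlinarith
    have hy2p : y2 > 0 := by nlinarith
    nlinarith [mul_pos hx1p hy2p, mul_pos hx2p hy1p]
end

section
/- Let $n \in \mathbb{N}$, let $a, b \in \mathbb{R}_{+}^{n}$ be nonnegative vectors, and let $\Delta \in \mathbb{N}$. Define $P$ as the set of $y \in \mathbb{R}_{\ge 0}^{n \times n}$ with $\sum_i y_{ij} = 1$ for all $j$, $\sum_j y_{ij} = 1$ for all $i$, $y_{ij} = y_{ji}$ for all $i,j$, and $\sum_i y_{ii} \ge n - 2\Delta$; and define $P'$ as the set of $z \in \mathbb{R}_{\ge 0}^{\mathcal{E}}$, $\mathcal{E} = \{(i,j) : 1 \le i < j \le n\}$, with $\sum_{j : j > i} z_{ij} + \sum_{j : j < i} z_{ji} \le 1$ for all $i$ and $\sum_{(i,j) \in \mathcal{E}} z_{ij} \le \Delta$. Then $\min_{y \in P} \sum_{i=1}^n \sum_{j=1}^n a_i b_j\, y_{ij} \;=\; \sum_{i=1}^n a_i b_i \;-\; \max_{z \in P'} \sum_{(i,j) \in \mathcal{E}}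 (a_i - a_j)(b_i - b_j)\, z_{ij}$. -/
/-!
A symmetric doubly stochastic matrix `y` is determined by its strict upper triangle `z`, which is
a fractional matching: the degree of `i` is `1 - y i i`, and the trace constraint is the
cardinality bound since `∑ i j, y i j = tr y + 2 ∑_{i<j} y i j`. Conversely every fractional
matching `z` is the upper triangle of the symmetric matrix with diagonal `1 - deg z`. Under this
correspondence the assignment cost is `∑ i, a i * b i` minus the matching weight, because
`∑ i j, (a i - a j) * (b i - b j) * y i j` equals both `2 ∑_{i<j}` of that expression and
`2 (∑ i, a i * b i - ∑ i j, a i * b j * y i j)` when `y` is symmetric with unit row sums.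
-/

section TriangularSums

variable {ι M : Type*} [Fintype ι] [LinearOrder ι]

def upperSum [AddCommMonoid M] (f : ι → ι → M) : M :=
  ∑ i, ∑ j, if i < j then f i j else 0

def fracDegree [AddCommMonoid M] (z : ι → ι → M) (i : ι) : M :=
  (∑ j, if i < j then z i j else 0) + ∑ j, if j < i then z j i else 0

theorem sum_eq_sum_ite_gt_add_add_sum_ite_lt [AddCommMonoid M] (g : ι → M) (i : ι) :
    ∑ j, g j = (∑ j, if i < j then g j else 0) + g i + ∑ j, if j < i then g j else 0 := by
  rw [show g i = ∑ j, if i = j then g j else 0 by simp, ← Finset.sum_add_distrib,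
    ← Finset.sum_add_distrib]
  refine Finset.sum_congr rfl fun j _ => ?_
  rcases lt_trichotomy i j with h | rfl | h
  · simp [h, h.ne, not_lt_of_gt h]
  · simp
  · simp [h, h.ne', not_lt_of_gt h]

theorem upperSum_congr [AddCommMonoid M] {f g : ι → ι → M} (h : ∀ i j, i < j → f i j = g i j) :
    upperSum f = upperSum g :=
  Finset.sum_congr rfl fun i _ => Finset.sum_congr rfl fun j _ => by
    split_ifs with hij
    exacts [h i j hij, rfl]

theorem fracDegree_congr [AddCommMonoid M] {y z : ι → ι → M}
    (h : ∀ i j, i < j → y i j = z i j) (i : ι) : fracDegree y i = fracDegree z i := by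
  unfold fracDegree
  congr 1 <;> refine Finset.sum_congr rfl fun j _ => ?_ <;> split_ifs with hij
  exacts [h i j hij, rfl, h j i hij, rfl]

theorem sum_fracDegree [AddCommMonoid M] (z : ι → ι → M) :
    ∑ i, fracDegree z i = 2 • upperSum z := by
  simp only [fracDegree, Finset.sum_add_distrib, upperSum, two_nsmul]
  rw [Finset.sum_comm (f := fun i j => if j < i then z j i else 0)]

theorem fracDegree_eq_sum_sub_diag [AddCommGroup M] {y : ι → ι → M} (hsym : ∀ i j, y i j = y j i)
    (i : ι) : fracDegree y i = ∑ j, y i j - y i i := by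
  rw [sum_eq_sum_ite_gt_add_add_sum_ite_lt (y i) i, fracDegree]
  simp_rw [hsym _ i]
  abel

theorem sum_sum_eq_trace_add_two_nsmul_upperSum [AddCommGroup M] {y : ι → ι → M}
    (hsym : ∀ i j, y i j = y j i) : ∑ i, ∑ j, y i j = ∑ i, y i i + 2 • upperSum y := by
  rw [← sum_fracDegree, ← Finset.sum_add_distrib]
  simp [fracDegree_eq_sum_sub_diag hsym]

end TriangularSums

theorem sum_sum_mul_mul_eq_sub_upperSum {ι : Type*} [Fintype ι] [LinearOrder ι] (a b : ι → ℝ)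
    {y : ι → ι → ℝ} (hsym : ∀ i j, y i j = y j i) (hrow : ∀ i, ∑ j, y i j = 1) :
    ∑ i, ∑ j, a i * b j * y i j
      = ∑ i, a i * b i - upperSum fun i j => (a i - a j) * (b i - b j) * y i j := by
  have hcol (j : ι) : ∑ i, y i j = 1 := by simp_rw [hsym _ j, hrow]
  have hweighted := sum_sum_eq_trace_add_two_nsmul_upperSum
    (y := fun i j => (a i - a j) * (b i - b j) * y i j) fun i j => by rw [hsym]; ring
  simp only [sub_self, zero_mul, Finset.sum_const_zero, zero_add, two_nsmul] at hweighted
  have hdiag_i : ∑ i, ∑ j, a i * b i * y i j = ∑ i, a i * b i := by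
    simp_rw [← Finset.mul_sum, hrow, mul_one]
  have hdiag_j : ∑ i, ∑ j, a j * b j * y i j = ∑ i, a i * b i := by
    rw [Finset.sum_comm]; simp_rw [← Finset.mul_sum, hcol, mul_one]
  have hcross : ∑ i, ∑ j, a j * b i * y i j = ∑ i, ∑ j, a i * b j * y i j := by
    rw [Finset.sum_comm]; simp_rw [hsym]
  have hexpand : ∑ i, ∑ j, (a i - a j) * (b i - b j) * y i j
      = ∑ i, ∑ j, a i * b i * y i j + ∑ i, ∑ j, a j * b j * y i j
        - ∑ i, ∑ j, a i * b j * y i j - ∑ i, ∑ j, a j * b i * y i j := by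
    simp only [← Finset.sum_add_distrib, ← Finset.sum_sub_distrib]
    congr! 2; ring
  linarith

section Polytopes

variable {n Δ : ℕ}

def symmAssignmentPolytope (n Δ : ℕ) : Set (Fin n → Fin n → ℝ) :=
  {y | (∀ i j, 0 ≤ y i j) ∧ (∀ j, ∑ i, y i j = 1) ∧ (∀ i, ∑ j, y i j = 1) ∧
    (∀ i j, y i j = y j i) ∧ (n : ℝ) - 2 * (Δ : ℝ) ≤ ∑ i, y i i}

/-- Only the strict upper triangle `i < j` of `z` is significant; it carries the edge weights. -/
def cardMatchingPolytope (n Δ : ℕ) : Set (Fin n → Fin n → ℝ) :=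
  {z | (∀ i j, i < j → 0 ≤ z i j) ∧ (∀ i, fracDegree z i ≤ 1) ∧ upperSum z ≤ (Δ : ℝ)}

theorem symmAssignmentPolytope_subset_cardMatchingPolytope :
    symmAssignmentPolytope n Δ ⊆ cardMatchingPolytope n Δ := by
  rintro y ⟨hnonneg, -, hrow, hsym, htrace⟩
  have htotal : ∑ i, ∑ j, y i j = n := by simp [hrow]
  rw [sum_sum_eq_trace_add_two_nsmul_upperSum hsym, two_nsmul] at htotal
  refine ⟨fun i j _ => hnonneg i j, fun i => ?_, by linarith⟩
  rw [fracDegree_eq_sum_sub_diag hsym, hrow]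
  linarith [hnonneg i i]

theorem le_one_of_mem_symmAssignmentPolytope {y : Fin n → Fin n → ℝ}
    (hy : y ∈ symmAssignmentPolytope n Δ) (i j : Fin n) : y i j ≤ 1 :=
  hy.2.1 j ▸ Finset.single_le_sum (fun k _ => hy.1 k j) (Finset.mem_univ i)

theorem zero_mem_cardMatchingPolytope : 0 ∈ cardMatchingPolytope n Δ :=
  ⟨fun _ _ _ => le_rfl, fun _ => by simp [fracDegree], by simp [upperSum]⟩

def assignmentOfMatching (z : Fin n → Fin n → ℝ) (i j : Fin n) : ℝ :=
  if i = j then 1 - fracDegree z i else if i < j then z i j else z j i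

theorem assignmentOfMatching_of_lt (z : Fin n → Fin n → ℝ) {i j : Fin n} (h : i < j) :
    assignmentOfMatching z i j = z i j := by
  simp [assignmentOfMatching, h, h.ne]

theorem assignmentOfMatching_self (z : Fin n → Fin n → ℝ) (i : Fin n) :
    assignmentOfMatching z i i = 1 - fracDegree z i := by
  simp [assignmentOfMatching]

theorem assignmentOfMatching_comm (z : Fin n → Fin n → ℝ) (i j : Fin n) :
    assignmentOfMatching z i j = assignmentOfMatching z j i := by
  rcases lt_trichotomy i j with h | rfl | h
  · simp [assignmentOfMatching, h, h.ne, h.ne', not_lt_of_gt h]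
  · rfl
  · simp [assignmentOfMatching, h, h.ne, h.ne', not_lt_of_gt h]

theorem assignmentOfMatching_mem {z : Fin n → Fin n → ℝ} (hz : z ∈ cardMatchingPolytope n Δ) :
    assignmentOfMatching z ∈ symmAssignmentPolytope n Δ := by
  obtain ⟨hnonneg, hdeg, hcard⟩ := hz
  have hsym := assignmentOfMatching_comm z
  have hrow (i : Fin n) : ∑ j, assignmentOfMatching z i j = 1 := by
    have h := fracDegree_eq_sum_sub_diag hsym i
    rw [fracDegree_congr (fun _ _ => assignmentOfMatching_of_lt z) i,
      assignmentOfMatching_self] at h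
    linarith
  refine ⟨fun i j => ?_, fun j => by simp_rw [hsym _ j, hrow], hrow, hsym, ?_⟩
  · rcases lt_trichotomy i j with h | rfl | h
    · exact assignmentOfMatching_of_lt z h ▸ hnonneg i j h
    · linarith [assignmentOfMatching_self z i, hdeg i]
    · exact hsym i j ▸ assignmentOfMatching_of_lt z h ▸ hnonneg j i h
  · have htrace : ∑ i, assignmentOfMatching z i i = n - 2 * upperSum z := by
      simp_rw [assignmentOfMatching_self, Finset.sum_sub_distrib, sum_fracDegree, two_nsmul]
      simp only [Finset.sum_const, Finset.card_univ, Fintype.card_fin, nsmul_eq_mul, mul_one]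
      ring
    linarith

end Polytopes

theorem image_symmAssignmentPolytope_eq_sub_image_cardMatchingPolytope
    {n : ℕ} (a b : Fin n → ℝ) (Δ : ℕ) :
    (fun y : Fin n → Fin n → ℝ => ∑ i, ∑ j, a i * b j * y i j) '' symmAssignmentPolytope n Δ
      = (∑ i, a i * b i - ·) ''
          ((fun z => upperSum fun i j => (a i - a j) * (b i - b j) * z i j) ''
            cardMatchingPolytope n Δ) := by
  rw [Set.image_image]
  apply Set.Subset.antisymm
  · rintro _ ⟨y, hy, rfl⟩
    exact ⟨y, symmAssignmentPolytope_subset_cardMatchingPolytope hy,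
      (sum_sum_mul_mul_eq_sub_upperSum a b hy.2.2.2.1 hy.2.2.1).symm⟩
  · rintro _ ⟨z, hz, rfl⟩
    have hy := assignmentOfMatching_mem hz
    refine ⟨assignmentOfMatching z, hy, ?_⟩
    dsimp only
    rw [sum_sum_mul_mul_eq_sub_upperSum a b hy.2.2.2.1 hy.2.2.1]
    congr 1
    exact upperSum_congr fun i j h => by rw [assignmentOfMatching_of_lt z h]

theorem bddBelow_image_symmAssignmentPolytope {n : ℕ} (a b : Fin n → ℝ) (Δ : ℕ) :
    BddBelow ((fun y : Fin n → Fin n → ℝ => ∑ i, ∑ j, a i * b j * y i j) ''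
      symmAssignmentPolytope n Δ) := by
  refine ⟨-∑ i, ∑ j, |a i * b j|, ?_⟩
  rintro _ ⟨y, hy, rfl⟩
  simp only [← Finset.sum_neg_distrib]
  refine Finset.sum_le_sum fun i _ => Finset.sum_le_sum fun j _ => ?_
  have h0 := hy.1 i j
  have h1 := le_one_of_mem_symmAssignmentPolytope hy i j
  nlinarith [neg_abs_le (a i * b j), abs_nonneg (a i * b j)]

theorem Real.sInf_image_const_sub {s : Set ℝ} (c : ℝ) (hne : s.Nonempty) (hbdd : BddAbove s) :
    sInf ((c - ·) '' s) = c - sSup s :=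
  (Antitone.map_csSup_of_continuousAt (continuous_sub_left c).continuousAt
    (fun _ _ h => sub_le_sub_left h c) hne hbdd).symm

theorem symmetric_assignment_eq_diagonal_sub_matching_general
    (n : ℕ) (a b : Fin n → ℝ) (Δ : ℕ) :
    sInf ((fun y : Fin n → Fin n → ℝ => ∑ i, ∑ j, a i * b j * y i j) ''
        {y | (∀ i j, 0 ≤ y i j) ∧ (∀ j, ∑ i, y i j = 1) ∧ (∀ i, ∑ j, y i j = 1) ∧
          (∀ i j, y i j = y j i) ∧ (n : ℝ) - 2 * (Δ : ℝ) ≤ ∑ i, y i i})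
      = ∑ i, a i * b i
        - sSup ((fun z : Fin n → Fin n → ℝ =>
              ∑ i, ∑ j, if i < j then (a i - a j) * (b i - b j) * z i j else 0) ''
            {z | (∀ i j, i < j → 0 ≤ z i j) ∧
              (∀ i : Fin n, (∑ j, if i < j then z i j else 0)
                + (∑ j, if j < i then z j i else 0) ≤ 1) ∧
              (∑ i, ∑ j, if i < j then z i j else 0) ≤ (Δ : ℝ)}) := by
  set weights := (fun z : Fin n → Fin n → ℝ =>
    upperSum fun i j => (a i - a j) * (b i - b j) * z i j) '' cardMatchingPolytope n Δ
  have himage := image_symmAssignmentPolytope_eq_sub_image_cardMatchingPolytope a b Δ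
  have hne : weights.Nonempty := ⟨_, 0, zero_mem_cardMatchingPolytope, rfl⟩
  have hbdd : BddAbove weights := by
    obtain ⟨m, hm⟩ := bddBelow_image_symmAssignmentPolytope a b Δ
    refine ⟨∑ i, a i * b i - m, fun s hs => ?_⟩
    have := hm (himage ▸ Set.mem_image_of_mem _ hs)
    linarith
  change sInf (_ '' symmAssignmentPolytope n Δ) = _ - sSup weights
  rw [himage, Real.sInf_image_const_sub _ hne hbdd]

/-- **Equivalence of the symmetric assignment LP and the cardinality-constrained
matching LP with product costs.**
The minimum of `∑ i j, a i * b j * y i j` over the level-constrained symmetric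
fractional assignment polytope equals `∑ i, a i * b i` minus the maximum of
`∑_{i<j} (a i - a j)(b i - b j) z i j` over the cardinality-constrained fractional
matching polytope of the complete graph. -/
theorem symmetric_assignment_eq_diagonal_sub_matching
    (n : ℕ) (a b : Fin n → ℝ) (ha : ∀ i, 0 ≤ a i) (hb : ∀ i, 0 ≤ b i) (Δ : ℕ) :
    sInf ((fun y : Fin n → Fin n → ℝ => ∑ i, ∑ j, a i * b j * y i j) ''
        {y | (∀ i j, 0 ≤ y i j) ∧ (∀ j, ∑ i, y i j = 1) ∧ (∀ i, ∑ j, y i j = 1) ∧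
          (∀ i j, y i j = y j i) ∧ (n : ℝ) - 2 * (Δ : ℝ) ≤ ∑ i, y i i})
      = ∑ i, a i * b i
        - sSup ((fun z : Fin n → Fin n → ℝ =>
              ∑ i, ∑ j, if i < j then (a i - a j) * (b i - b j) * z i j else 0) ''
            {z | (∀ i j, i < j → 0 ≤ z i j) ∧
              (∀ i : Fin n, (∑ j, if i < j then z i j else 0)
                + (∑ j, if j < i then z j i else 0) ≤ 1) ∧
              (∑ i, ∑ j, if i < j then z i j else 0) ≤ (Δ : ℝ)}) :=
  symmetric_assignment_eq_diagonal_sub_matching_general n a b Δ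
end

section
/- Let $n, M \in \mathbb{N}$, $\Delta \in \mathbb{N}$, and $A \in \mathbb{R}^{M \times n}$. Let $\mathcal{E} = \{(i,j) : 1 \le i < j \le n\}$. Suppose $x \in \mathbb{R}_{\ge 0}^{n \times n}$ satisfies $\sum_i x_{i\ell} = 1$ for all $\ell$ and $\sum_\ell x_{i\ell} = 1$ for all $i$; $q \in \mathbb{R}_{\ge 0}^{M}$; and $z \in \mathbb{R}_{\ge 0}^{\mathcal{E}}$ satisfies $\sum_{j > i} z_{ij} + \sum_{j < i} z_{ji} \le 1$ for all $i$, $\sum_{(i,j) \in \mathcal{E}} z_{ij} \le \Delta$, and, writing $L_j = \sum_{\ell=1}^n \ell\, x_{j\ell}$, the matching-formulation constraints $\sum_{m=1}^M a_{mi} q_m + \sum_{j>i} (L_j - L_i) z_{ij} - \sum_{j<i} (L_i - L_j) z_{ji} \ge n + 1 - L_i$ for all $i$. Define $y \in \mathbb{R}^{n \times n}$ by $y_{ij} = y_{ji} = z_{ij}$ for $i < j$ and $y_{ii} = 1 - \sum_{j>i} z_{ij} - \sum_{j<i} z_{ji}$. Then $y \ge 0$, $\sum_i y_{ij} = 1$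 for all $j$, $\sum_j y_{ij} = 1$ for all $i$, $y_{ij} = y_{ji}$ for all $i,j$, $\sum_i y_{ii} \ge n - 2\Delta$, and $\sum_{m=1}^M a_{mi} q_m \ge \sum_{j=1}^n (n + 1 - L_j)\, y_{ij}$ for all $i$; i.e. $(x, y, q)$ is feasible for the assignment-based formulation with the same objective value $\sum_{m=1}^M b_m q_m$. Consequently, for every right-hand side $b \in \mathbb{R}^M$, the optimal value of the linear relaxation of the non-linear matching-based formulation is greater than or equal to that of the non-linear assignment-based formulation. -/
lemma rrss_key {n : ℕ} (Δ : ℕ) (z : Fin n → Fin n → ℝ) (L c : Fin n → ℝ)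
    (hz0 : ∀ i j : Fin n, i < j → 0 ≤ z i j)
    (hzdeg : ∀ i : Fin n, (∑ j, if i < j then z i j else 0)
      + (∑ j, if j < i then z j i else 0) ≤ 1)
    (hzcard : (∑ i, ∑ j, if i < j then z i j else 0) ≤ (Δ : ℝ))
    (hmatch : ∀ i : Fin n,
      (n : ℝ) + 1 - L i ≤ c i
        + (∑ j, if i < j then (L j - L i) * z i j else 0)
        - (∑ j, if j < i then (L i - L j) * z j i else 0)) :
    let y : Fin n → Fin n → ℝ := fun i j =>
      if i < j then z i j else if j < i then z j i else
        1 - ((∑ k, if i < k then z i k else 0) + (∑ k, if k < i then z k i else 0))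
    (∀ i j, 0 ≤ y i j) ∧
    (∀ j, ∑ i, y i j = 1) ∧
    (∀ i, ∑ j, y i j = 1) ∧
    (∀ i j, y i j = y j i) ∧
    ((n : ℝ) - 2 * (Δ : ℝ) ≤ ∑ i, y i i) ∧
    (∀ i : Fin n, ∑ j, ((n : ℝ) + 1 - L j) * y i j ≤ c i) := by
  intro y
  have hdecomp : ∀ (i : Fin n) (g : Fin n → ℝ),
      ∑ j, g j * y i j
        = (∑ j, if i < j then g j * z i j else 0)
          + (∑ j, if j < i then g j * z j i else 0)
          + g i * (1 - ((∑ k, if i < k then z i k else 0)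
              + (∑ k, if k < i then z k i else 0))) := by
    intro i g
    have : ∀ j, g j * y i j
        = (if i < j then g j * z i j else 0)
          + (if j < i then g j * z j i else 0)
          + (if j = i then g i * (1 - ((∑ k, if i < k then z i k else 0)
              + (∑ k, if k < i then z k i else 0))) else 0) := by
      intro j
      rcases lt_trichotomy i j with h | h | h
      · simp [y, h, asymm h, h.ne']
      · subst h; simp [y]
      · simp [y, h, asymm h, h.ne]
    rw [Finset.sum_congr rfl fun j _ => this j]
    rw [Finset.sum_add_distrib, Finset.sum_add_distrib, Finset.sum_ite_eq' Finset.univ i]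
    simp
  have hsymm : ∀ i j, y i j = y j i := by
    intro i j
    rcases lt_trichotomy i j with h | h | h
    · simp [y, h, asymm h]
    · subst h; rfl
    · simp [y, h, asymm h]
  have hrow : ∀ i, ∑ j, y i j = 1 := by
    intro i
    have := hdecomp i (fun _ => 1)
    simp only [one_mul] at this
    rw [this]; ring
  refine ⟨?_, ?_, hrow, hsymm, ?_, ?_⟩
  · intro i j
    rcases lt_trichotomy i j with h | h | h
    · simpa [y, h] using hz0 i j h
    · subst h
      simp only [y, lt_irrefl, if_false]
      linarith [hzdeg i]
    · simpa [y, h, asymm h] using hz0 j i h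
  · intro j
    rw [Finset.sum_congr rfl fun i _ => hsymm i j]
    exact hrow j
  · -- trace
    have hdiag : ∀ i : Fin n, y i i
        = 1 - ((∑ k, if i < k then z i k else 0) + (∑ k, if k < i then z k i else 0)) := by
      intro i; simp [y]
    rw [Finset.sum_congr rfl fun i _ => hdiag i]
    rw [Finset.sum_sub_distrib, Finset.sum_add_distrib]
    have hswap : (∑ i, ∑ k : Fin n, if k < i then z k i else 0)
        = ∑ i, ∑ j, if i < j then z i j else 0 := by
      rw [Finset.sum_comm]
    rw [hswap]
    simp only [Finset.sum_const, Finset.card_univ, Fintype.card_fin, nsmul_eq_mul, mul_one]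
    linarith
  · intro i
    have hd := hdecomp i (fun j => (n : ℝ) + 1 - L j)
    have h1 : (∑ j, if i < j then ((n : ℝ) + 1 - L j) * z i j else 0)
        = ((n : ℝ) + 1 - L i) * (∑ j, if i < j then z i j else 0)
          - (∑ j, if i < j then (L j - L i) * z i j else 0) := by
      rw [Finset.mul_sum, ← Finset.sum_sub_distrib]
      refine Finset.sum_congr rfl fun j _ => ?_
      split <;> ring
    have h2 : (∑ j, if j < i then ((n : ℝ) + 1 - L j) * z j i else 0)
        = ((n : ℝ) + 1 - L i) * (∑ j, if j < i then z j i else 0)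
          + (∑ j, if j < i then (L i - L j) * z j i else 0) := by
      rw [Finset.mul_sum, ← Finset.sum_add_distrib]
      refine Finset.sum_congr rfl fun j _ => ?_
      split <;> ring
    rw [hd, h1, h2]
    have := hmatch i
    nlinarith [this]
/-- **Dominance of the matching-based formulation over the assignment-based one.**
Every feasible solution `(x, z, q)` of the linear relaxation of the non-linear
matching-based formulation maps to a feasible solution `(x, y, q)` of the non-linear
assignment-based formulation with the same objective value; consequently, for every
right-hand side `b`, the optimal value of the relaxed matching-based formulation is
at least that of the relaxed assignment-based formulation. -/
theorem matching_formulation_dominates_assignment_formulation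
    (n M Δ : ℕ) (A : Fin M → Fin n → ℝ)
    (x : Fin n → Fin n → ℝ) (q : Fin M → ℝ) (z : Fin n → Fin n → ℝ)
    (L : Fin n → ℝ) (hL : ∀ j, L j = ∑ ℓ : Fin n, (((ℓ : ℕ) : ℝ) + 1) * x j ℓ)
    (hx0 : ∀ i ℓ, 0 ≤ x i ℓ)
    (hxcol : ∀ ℓ, ∑ i, x i ℓ = 1) (hxrow : ∀ i, ∑ ℓ, x i ℓ = 1)
    (hq0 : ∀ m, 0 ≤ q m)
    (hz0 : ∀ i j : Fin n, i < j → 0 ≤ z i j)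
    (hzdeg : ∀ i : Fin n, (∑ j, if i < j then z i j else 0)
      + (∑ j, if j < i then z j i else 0) ≤ 1)
    (hzcard : (∑ i, ∑ j, if i < j then z i j else 0) ≤ (Δ : ℝ))
    (hmatch : ∀ i : Fin n,
      (n : ℝ) + 1 - L i ≤ (∑ m, A m i * q m)
        + (∑ j, if i < j then (L j - L i) * z i j else 0)
        - (∑ j, if j < i then (L i - L j) * z j i else 0)) :
    let y : Fin n → Fin n → ℝ := fun i j =>
      if i < j then z i j else if j < i then z j i else
        1 - ((∑ k, if i < k then z i k else 0) + (∑ k, if k < i then z k i else 0))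
    (∀ i j, 0 ≤ y i j) ∧
    (∀ j, ∑ i, y i j = 1) ∧
    (∀ i, ∑ j, y i j = 1) ∧
    (∀ i j, y i j = y j i) ∧
    ((n : ℝ) - 2 * (Δ : ℝ) ≤ ∑ i, y i i) ∧
    (∀ i : Fin n, ∑ j, ((n : ℝ) + 1 - L j) * y i j ≤ ∑ m, A m i * q m) ∧
    ∀ b : Fin M → ℝ,
      sInf {v : EReal | ∃ (x' y' : Fin n → Fin n → ℝ) (q' : Fin M → ℝ),
          (∀ i ℓ, 0 ≤ x' i ℓ) ∧ (∀ ℓ, ∑ i, x' i ℓ = 1) ∧ (∀ i, ∑ ℓ, x' i ℓ = 1) ∧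
          (∀ m, 0 ≤ q' m) ∧
          (∀ i j, 0 ≤ y' i j) ∧ (∀ j, ∑ i, y' i j = 1) ∧ (∀ i, ∑ j, y' i j = 1) ∧
          (∀ i j, y' i j = y' j i) ∧
          ((n : ℝ) - 2 * (Δ : ℝ) ≤ ∑ i, y' i i) ∧
          (∀ i : Fin n, ∑ j,
              ((n : ℝ) + 1 - ∑ ℓ : Fin n, (((ℓ : ℕ) : ℝ) + 1) * x' j ℓ) * y' i j
            ≤ ∑ m, A m i * q' m) ∧
          v = ((∑ m, b m * q' m : ℝ) : EReal)}
      ≤ sInf {v : EReal | ∃ (x' z' : Fin n → Fin n → ℝ) (q' : Fin M → ℝ),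
          (∀ i ℓ, 0 ≤ x' i ℓ) ∧ (∀ ℓ, ∑ i, x' i ℓ = 1) ∧ (∀ i, ∑ ℓ, x' i ℓ = 1) ∧
          (∀ m, 0 ≤ q' m) ∧
          (∀ i j : Fin n, i < j → 0 ≤ z' i j) ∧
          (∀ i : Fin n, (∑ j, if i < j then z' i j else 0)
            + (∑ j, if j < i then z' j i else 0) ≤ 1) ∧
          ((∑ i, ∑ j, if i < j then z' i j else 0) ≤ (Δ : ℝ)) ∧
          (∀ i : Fin n,
            (n : ℝ) + 1 - (∑ ℓ : Fin n, (((ℓ : ℕ) : ℝ) + 1) * x' i ℓ)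
              ≤ (∑ m, A m i * q' m)
                + (∑ j, if i < j then
                    ((∑ ℓ : Fin n, (((ℓ : ℕ) : ℝ) + 1) * x' j ℓ)
                      - (∑ ℓ : Fin n, (((ℓ : ℕ) : ℝ) + 1) * x' i ℓ)) * z' i j else 0)
                - (∑ j, if j < i then
                    ((∑ ℓ : Fin n, (((ℓ : ℕ) : ℝ) + 1) * x' i ℓ)
                      - (∑ ℓ : Fin n, (((ℓ : ℕ) : ℝ) + 1) * x' j ℓ)) * z' j i else 0)) ∧
          v = ((∑ m, b m * q' m : ℝ) : EReal)} := by
  intro y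
  obtain ⟨h1, h2, h3, h4, h5, h6⟩ :=
    rrss_key Δ z L (fun i => ∑ m, A m i * q m) hz0 hzdeg hzcard hmatch
  refine ⟨h1, h2, h3, h4, h5, h6, ?_⟩
  intro b
  apply sInf_le_sInf
  rintro v ⟨x', z', q', hx0', hxcol', hxrow', hq0', hz0', hzdeg', hzcard', hmatch', hv⟩
  obtain ⟨g1, g2, g3, g4, g5, g6⟩ :=
    rrss_key Δ z' (fun j => ∑ ℓ : Fin n, (((ℓ : ℕ) : ℝ) + 1) * x' j ℓ)
      (fun i => ∑ m, A m i * q' m) hz0' hzdeg' hzcard' hmatch'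
  exact ⟨x', _, q', hx0', hxcol', hxrow', hq0', g1, g2, g3, g4, g5, g6, hv⟩
end
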